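/- arXiv:2007.02506 — 2 statements merged into one kernel-verified Lean document; each statement's English description precedes it below -/
import Mathlib

section
/- Let C₁, C₂, C₃ be coalgebras over a field k such that (C₁,C₂), (C₁,C₃), (C₂,C₃) are Dorroh pairs of coalgebras, C₃ is both a C₁-C₂-bicomodule and a C₂-C₁-bicomodule (via its C₁- and C₂-comodule structure maps ρ_{l,C₃}^{C₁}, ρ_{r,C₃}^{C₁}, ρ_{l,C₃}^{C₂}, ρ_{r,C₃}^{C₂}), and the four mixed compatibility conditions hold: (id⊗ρ_{l,C₃}^{C₁})ρ_{l,C₃}^{C₂} = (ρ_{r,C₂}^{C₁}⊗id)ρ_{l,C₃}^{C₂}, (id⊗ρ_{l,C₃}^{C₂})ρ_{l,C₃}^{C₁} = (ρ_{l,C₂}^{C₁}⊗id)ρ_{l,C₃}^{C₂}, (ρ_{r,C₃}^{C₁}⊗id)ρ_{r,C₃}^{C₂} = (id⊗ρ_{l,C₂}^{C₁})ρ_{r,C₃}^{C₂}, (ρ_{r,C₃}^{C₂}⊗id)ρ_{r,C₃}^{C₁} = (id⊗ρ_{r,C₂}^{C₁})ρ_{r,C₃}^{C₂}. Then (C₁⋉_d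 C₂, C₃) and (C₁, C₂⋉_d C₃) are Dorroh pairs of coalgebras (with the componentwise comodule structures), and the map ((c,d),e) ↦ (c,(d,e)) is a coalgebra isomorphism (C₁⋉_d C₂)⋉_d C₃ ≅ C₁⋉_d(C₂⋉_d C₃). -/
open TensorProduct

section

variable {k : Type} [Field k] {C P : Type}
  [AddCommGroup C] [Module k C] [AddCommGroup P] [Module k P]

/-- Coassociativity of a (not necessarily counital) comultiplication. -/
def Coassoc (Δ : C →ₗ[k] C ⊗[k] C) : Prop :=
  (TensorProduct.assoc k C C C).toLinearMap ∘ₗ Δ.rTensor C ∘ₗ Δ = Δ.lTensor C ∘ₗ Δ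

/-- `(C, P)` together with the comultiplications `ΔC`, `ΔP` and the coactions
`ρl : P → C ⊗ P`, `ρr : P → P ⊗ C` is a Dorroh pair of coalgebras. -/
def IsDorrohPairC (ΔC : C →ₗ[k] C ⊗[k] C) (ΔP : P →ₗ[k] P ⊗[k] P)
    (ρl : P →ₗ[k] C ⊗[k] P) (ρr : P →ₗ[k] P ⊗[k] C) : Prop :=
  Coassoc ΔC ∧ Coassoc ΔP ∧
  ((TensorProduct.assoc k C C P).toLinearMap ∘ₗ ΔC.rTensor P ∘ₗ ρl = ρl.lTensor C ∘ₗ ρl) ∧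
  (ΔC.lTensor P ∘ₗ ρr = (TensorProduct.assoc k P C C).toLinearMap ∘ₗ ρr.rTensor C ∘ₗ ρr) ∧
  (ρr.lTensor C ∘ₗ ρl = (TensorProduct.assoc k C P C).toLinearMap ∘ₗ ρl.rTensor C ∘ₗ ρr) ∧
  (ρr.lTensor P ∘ₗ ΔP = (TensorProduct.assoc k P P C).toLinearMap ∘ₗ ΔP.rTensor C ∘ₗ ρr) ∧
  ((TensorProduct.assoc k C P P).toLinearMap ∘ₗ ρl.rTensor P ∘ₗ ΔP = ΔP.lTensor C ∘ₗ ρl) ∧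
  ((TensorProduct.assoc k P C P).toLinearMap ∘ₗ ρr.rTensor P ∘ₗ ΔP = ρl.lTensor P ∘ₗ ΔP)

/-- The comultiplication of the Dorroh extension `C ⋉_d P`,
`Δ(c,p) = Σ (c₁,0)⊗(c₂,0) + Σ (p₍₋₁₎,0)⊗(0,p₍₀₎) + Σ (0,p₍₀₎)⊗(p₍₁₎,0) + Σ (0,p₁)⊗(0,p₂)`. -/
noncomputable def dorrohComul (ΔC : C →ₗ[k] C ⊗[k] C) (ΔP : P →ₗ[k] P ⊗[k] P)
    (ρl : P →ₗ[k] C ⊗[k] P) (ρr : P →ₗ[k] P ⊗[k] C) :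
    (C × P) →ₗ[k] (C × P) ⊗[k] (C × P) :=
  TensorProduct.map (LinearMap.inl k C P) (LinearMap.inl k C P) ∘ₗ ΔC ∘ₗ LinearMap.fst k C P
  + TensorProduct.map (LinearMap.inl k C P) (LinearMap.inr k C P) ∘ₗ ρl ∘ₗ LinearMap.snd k C P
  + TensorProduct.map (LinearMap.inr k C P) (LinearMap.inl k C P) ∘ₗ ρr ∘ₗ LinearMap.snd k C P
  + TensorProduct.map (LinearMap.inr k C P) (LinearMap.inr k C P) ∘ₗ ΔP ∘ₗ LinearMap.snd k C P


section tk
open LinearMap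
variable {V₁ V₂ V₃ V₄ V₅ V₆ V₇ V₈ : Type} [AddCommGroup V₁] [Module k V₁] [AddCommGroup V₂] [Module k V₂]
  [AddCommGroup V₃] [Module k V₃] [AddCommGroup V₄] [Module k V₄] [AddCommGroup V₅] [Module k V₅]
  [AddCommGroup V₆] [Module k V₆] [AddCommGroup V₇] [Module k V₇] [AddCommGroup V₈] [Module k V₈]

private lemma lT_eq (f : V₁ →ₗ[k] V₂) : f.lTensor V₃ = TensorProduct.map LinearMap.id f := rfl
private lemma rT_eq (f : V₁ →ₗ[k] V₂) : f.rTensor V₃ = TensorProduct.map f LinearMap.id := rfl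

private lemma mapfuse (a : V₁ →ₗ[k] V₂) (b : V₃ →ₗ[k] V₄) (c : V₅ →ₗ[k] V₁) (d : V₆ →ₗ[k] V₃)
    (e : V₇ →ₗ[k] V₅ ⊗[k] V₆) :
    TensorProduct.map a b ∘ₗ (TensorProduct.map c d ∘ₗ e) =
      TensorProduct.map (a ∘ₗ c) (b ∘ₗ d) ∘ₗ e := by
  rw [← LinearMap.comp_assoc, ← TensorProduct.map_comp]

private lemma mapfuse0 (a : V₁ →ₗ[k] V₂) (b : V₃ →ₗ[k] V₄) (c : V₅ →ₗ[k] V₁) (d : V₆ →ₗ[k] V₃) :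
    TensorProduct.map a b ∘ₗ TensorProduct.map c d =
      TensorProduct.map (a ∘ₗ c) (b ∘ₗ d) := (TensorProduct.map_comp ..).symm

private lemma nat0 (f : V₁ →ₗ[k] V₂) (g : V₃ →ₗ[k] V₄) (h : V₅ →ₗ[k] V₆)
    (w : V₇ →ₗ[k] (V₁ ⊗[k] V₃) ⊗[k] V₅) :
    (TensorProduct.assoc k V₂ V₄ V₆).toLinearMap ∘ₗ
        (TensorProduct.map (TensorProduct.map f g) h ∘ₗ w) =
      TensorProduct.map f (TensorProduct.map g h) ∘ₗ
        ((TensorProduct.assoc k V₁ V₃ V₅).toLinearMap ∘ₗ w) := by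
  rw [← LinearMap.comp_assoc, ← TensorProduct.map_map_comp_assoc_eq, LinearMap.comp_assoc]

private lemma nat1 (f : V₁ →ₗ[k] V₂) (g : V₃ →ₗ[k] V₄) (h : V₅ →ₗ[k] V₆) (u : V₈ →ₗ[k] V₁ ⊗[k] V₃)
    (w : V₇ →ₗ[k] V₈ ⊗[k] V₅) :
    (TensorProduct.assoc k V₂ V₄ V₆).toLinearMap ∘ₗ
        (TensorProduct.map (TensorProduct.map f g ∘ₗ u) h ∘ₗ w) =
      TensorProduct.map f (TensorProduct.map g h) ∘ₗ
        ((TensorProduct.assoc k V₁ V₃ V₅).toLinearMap ∘ₗ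
          (TensorProduct.map u LinearMap.id ∘ₗ w)) := by
  have : TensorProduct.map (TensorProduct.map f g ∘ₗ u) h =
      TensorProduct.map (TensorProduct.map f g) h ∘ₗ TensorProduct.map u LinearMap.id := by
    rw [mapfuse0, LinearMap.comp_id]
  rw [this, LinearMap.comp_assoc, nat0]

private lemma nat2 (f : V₁ →ₗ[k] V₂) (g : V₃ →ₗ[k] V₄) (h : V₅ →ₗ[k] V₆) (v : V₈ →ₗ[k] V₅)
    (w : V₇ →ₗ[k] (V₁ ⊗[k] V₃) ⊗[k] V₈) :
    (TensorProduct.assoc k V₂ V₄ V₆).toLinearMap ∘ₗ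
        (TensorProduct.map (TensorProduct.map f g) (h ∘ₗ v) ∘ₗ w) =
      TensorProduct.map f (TensorProduct.map g h) ∘ₗ
        ((TensorProduct.assoc k V₁ V₃ V₅).toLinearMap ∘ₗ
          (TensorProduct.map LinearMap.id v ∘ₗ w)) := by
  have : TensorProduct.map (TensorProduct.map f g) (h ∘ₗ v) =
      TensorProduct.map (TensorProduct.map f g) h ∘ₗ TensorProduct.map LinearMap.id v := by
    rw [mapfuse0, LinearMap.comp_id]
  rw [this, LinearMap.comp_assoc, nat0]

private lemma nat3 (f : V₁ →ₗ[k] V₂) (g : V₃ →ₗ[k] V₄) (h : V₅ →ₗ[k] V₆) (u : V₈ →ₗ[k] V₁ ⊗[k] V₃)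
    (v : V₇ →ₗ[k] V₅) (w : V₄ →ₗ[k] V₈ ⊗[k] V₇) :
    (TensorProduct.assoc k V₂ V₄ V₆).toLinearMap ∘ₗ
        (TensorProduct.map (TensorProduct.map f g ∘ₗ u) (h ∘ₗ v) ∘ₗ w) =
      TensorProduct.map f (TensorProduct.map g h) ∘ₗ
        ((TensorProduct.assoc k V₁ V₃ V₅).toLinearMap ∘ₗ
          (TensorProduct.map u v ∘ₗ w)) := by
  have : TensorProduct.map (TensorProduct.map f g ∘ₗ u) (h ∘ₗ v) =
      TensorProduct.map (TensorProduct.map f g) h ∘ₗ TensorProduct.map u v := by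
    rw [mapfuse0]
  rw [this, LinearMap.comp_assoc, nat0]

-- pull an injection out of the third tensor slot across the associator
private lemma natL_inl (u : V₈ →ₗ[k] V₁ ⊗[k] V₃) (w : V₇ →ₗ[k] V₈ ⊗[k] V₅)  :
    (TensorProduct.assoc k V₁ V₃ (V₅ × V₆)).toLinearMap ∘ₗ
        (TensorProduct.map u (inl k V₅ V₆) ∘ₗ w) =
      TensorProduct.map LinearMap.id (TensorProduct.map LinearMap.id (inl k V₅ V₆)) ∘ₗ
        ((TensorProduct.assoc k V₁ V₃ V₅).toLinearMap ∘ₗ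
          (TensorProduct.map u LinearMap.id ∘ₗ w)) := by
  have : TensorProduct.map u (inl k V₅ V₆) =
      TensorProduct.map (TensorProduct.map (LinearMap.id (M := V₁)) (LinearMap.id (M := V₃)))
        (inl k V₅ V₆) ∘ₗ TensorProduct.map u LinearMap.id := by
    rw [TensorProduct.map_id, mapfuse0, LinearMap.id_comp, LinearMap.comp_id]
  rw [this, LinearMap.comp_assoc, nat0]

private lemma natL_inr (u : V₈ →ₗ[k] V₁ ⊗[k] V₃) (w : V₇ →ₗ[k] V₈ ⊗[k] V₆) :
    (TensorProduct.assoc k V₁ V₃ (V₅ × V₆)).toLinearMap ∘ₗ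
        (TensorProduct.map u (inr k V₅ V₆) ∘ₗ w) =
      TensorProduct.map LinearMap.id (TensorProduct.map LinearMap.id (inr k V₅ V₆)) ∘ₗ
        ((TensorProduct.assoc k V₁ V₃ V₆).toLinearMap ∘ₗ
          (TensorProduct.map u LinearMap.id ∘ₗ w)) := by
  have : TensorProduct.map u (inr k V₅ V₆) =
      TensorProduct.map (TensorProduct.map (LinearMap.id (M := V₁)) (LinearMap.id (M := V₃)))
        (inr k V₅ V₆) ∘ₗ TensorProduct.map u LinearMap.id := by
    rw [TensorProduct.map_id, mapfuse0, LinearMap.id_comp, LinearMap.comp_id]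
  rw [this, LinearMap.comp_assoc, nat0]

private lemma natL_inl' (u : V₈ →ₗ[k] V₁ ⊗[k] V₃) (v : V₇ →ₗ[k] V₅) (w : V₄ →ₗ[k] V₈ ⊗[k] V₇) :
    (TensorProduct.assoc k V₁ V₃ (V₅ × V₆)).toLinearMap ∘ₗ
        (TensorProduct.map u (inl k V₅ V₆ ∘ₗ v) ∘ₗ w) =
      TensorProduct.map LinearMap.id (TensorProduct.map LinearMap.id (inl k V₅ V₆)) ∘ₗ
        ((TensorProduct.assoc k V₁ V₃ V₅).toLinearMap ∘ₗ
          (TensorProduct.map u v ∘ₗ w)) := by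
  have : TensorProduct.map u (inl k V₅ V₆ ∘ₗ v) =
      TensorProduct.map u (inl k V₅ V₆) ∘ₗ TensorProduct.map LinearMap.id v := by
    rw [mapfuse0, LinearMap.comp_id]
  rw [this, LinearMap.comp_assoc, natL_inl]
  rw [mapfuse, LinearMap.id_comp, LinearMap.comp_id]

private lemma natL_inr' (u : V₈ →ₗ[k] V₁ ⊗[k] V₃) (v : V₇ →ₗ[k] V₆) (w : V₄ →ₗ[k] V₈ ⊗[k] V₇) :
    (TensorProduct.assoc k V₁ V₃ (V₅ × V₆)).toLinearMap ∘ₗ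
        (TensorProduct.map u (inr k V₅ V₆ ∘ₗ v) ∘ₗ w) =
      TensorProduct.map LinearMap.id (TensorProduct.map LinearMap.id (inr k V₅ V₆)) ∘ₗ
        ((TensorProduct.assoc k V₁ V₃ V₆).toLinearMap ∘ₗ
          (TensorProduct.map u v ∘ₗ w)) := by
  have : TensorProduct.map u (inr k V₅ V₆ ∘ₗ v) =
      TensorProduct.map u (inr k V₅ V₆) ∘ₗ TensorProduct.map LinearMap.id v := by
    rw [mapfuse0, LinearMap.comp_id]
  rw [this, LinearMap.comp_assoc, natL_inr]
  rw [mapfuse, LinearMap.id_comp, LinearMap.comp_id]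

private lemma fst_inl' (h : V₇ →ₗ[k] V₁) : fst k V₁ V₂ ∘ₗ (inl k V₁ V₂ ∘ₗ h) = h := by
  rw [← LinearMap.comp_assoc]; simp
private lemma snd_inl' (h : V₇ →ₗ[k] V₁) : snd k V₁ V₂ ∘ₗ (inl k V₁ V₂ ∘ₗ h) = 0 := by
  rw [← LinearMap.comp_assoc]; simp
private lemma fst_inr' (h : V₇ →ₗ[k] V₂) : fst k V₁ V₂ ∘ₗ (inr k V₁ V₂ ∘ₗ h) = 0 := by
  rw [← LinearMap.comp_assoc]; simp
private lemma snd_inr' (h : V₇ →ₗ[k] V₂) : snd k V₁ V₂ ∘ₗ (inr k V₁ V₂ ∘ₗ h) = h := by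
  rw [← LinearMap.comp_assoc]; simp

end tk

section coassoc
open LinearMap
variable {Q₁ Q₂ : Type} [AddCommGroup Q₁] [Module k Q₁] [AddCommGroup Q₂] [Module k Q₂]

private lemma dorroh_coassoc {ΔC : Q₁ →ₗ[k] Q₁ ⊗[k] Q₁} {ΔP : Q₂ →ₗ[k] Q₂ ⊗[k] Q₂}
    {ρl : Q₂ →ₗ[k] Q₁ ⊗[k] Q₂} {ρr : Q₂ →ₗ[k] Q₂ ⊗[k] Q₁}
    (h : IsDorrohPairC ΔC ΔP ρl ρr) : Coassoc (dorrohComul ΔC ΔP ρl ρr) := by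
  obtain ⟨h1, h2, h3, h4, h5, h6, h7, h8⟩ := h
  unfold Coassoc at h1 h2 ⊢
  replace h4 := h4.symm
  replace h5 := h5.symm
  replace h6 := h6.symm
  simp only [lT_eq, rT_eq, LinearMap.comp_assoc] at h1 h2 h3 h4 h5 h6 h7 h8
  apply LinearMap.prod_ext <;>
  · simp only [dorrohComul, lT_eq, rT_eq, LinearMap.comp_assoc, LinearMap.add_comp,
      LinearMap.comp_add, TensorProduct.map_add_left, TensorProduct.map_add_right,
      mapfuse, mapfuse0, nat3, nat1, nat2, nat0, natL_inl', natL_inr', natL_inl, natL_inr,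
      fst_inl', snd_inl', fst_inr', snd_inr',
      LinearMap.fst_comp_inl, LinearMap.snd_comp_inl, LinearMap.fst_comp_inr,
      LinearMap.snd_comp_inr, LinearMap.comp_id, LinearMap.id_comp, LinearMap.comp_zero,
      LinearMap.zero_comp, TensorProduct.map_zero_left, TensorProduct.map_zero_right,
      TensorProduct.map_id, zero_add, add_zero, h1, h2, h3, h4, h5, h6, h7, h8]
    try abel

end coassoc

section phi
open LinearMap
variable {W₁ W₂ W₃ W₄ : Type} [AddCommGroup W₁] [Module k W₁] [AddCommGroup W₂] [Module k W₂]
  [AddCommGroup W₃] [Module k W₃] [AddCommGroup W₄] [Module k W₄]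

private lemma phi_inl_inl :
    (LinearMap.prod (fst k W₁ W₂ ∘ₗ fst k (W₁ × W₂) W₃)
        (LinearMap.prod (snd k W₁ W₂ ∘ₗ fst k (W₁ × W₂) W₃) (snd k (W₁ × W₂) W₃))) ∘ₗ
      (inl k (W₁ × W₂) W₃ ∘ₗ inl k W₁ W₂) = inl k W₁ (W₂ × W₃) := by
  ext x <;> rfl

private lemma phi_inl_inr :
    (LinearMap.prod (fst k W₁ W₂ ∘ₗ fst k (W₁ × W₂) W₃)
        (LinearMap.prod (snd k W₁ W₂ ∘ₗ fst k (W₁ × W₂) W₃) (snd k (W₁ × W₂) W₃))) ∘ₗ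
      (inl k (W₁ × W₂) W₃ ∘ₗ inr k W₁ W₂) = inr k W₁ (W₂ × W₃) ∘ₗ inl k W₂ W₃ := by
  ext x <;> rfl

private lemma phi_inr :
    (LinearMap.prod (fst k W₁ W₂ ∘ₗ fst k (W₁ × W₂) W₃)
        (LinearMap.prod (snd k W₁ W₂ ∘ₗ fst k (W₁ × W₂) W₃) (snd k (W₁ × W₂) W₃))) ∘ₗ
      inr k (W₁ × W₂) W₃ = inr k W₁ (W₂ × W₃) ∘ₗ inr k W₂ W₃ := by
  ext x <;> rfl

private lemma phi_inl_inl' (h : W₄ →ₗ[k] W₁) :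
    (LinearMap.prod (fst k W₁ W₂ ∘ₗ fst k (W₁ × W₂) W₃)
        (LinearMap.prod (snd k W₁ W₂ ∘ₗ fst k (W₁ × W₂) W₃) (snd k (W₁ × W₂) W₃))) ∘ₗ
      (inl k (W₁ × W₂) W₃ ∘ₗ (inl k W₁ W₂ ∘ₗ h)) = inl k W₁ (W₂ × W₃) ∘ₗ h := by
  ext x <;> rfl

private lemma phi_inl_inr' (h : W₄ →ₗ[k] W₂) :
    (LinearMap.prod (fst k W₁ W₂ ∘ₗ fst k (W₁ × W₂) W₃)
        (LinearMap.prod (snd k W₁ W₂ ∘ₗ fst k (W₁ × W₂) W₃) (snd k (W₁ × W₂) W₃))) ∘ₗ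
      (inl k (W₁ × W₂) W₃ ∘ₗ (inr k W₁ W₂ ∘ₗ h)) = inr k W₁ (W₂ × W₃) ∘ₗ (inl k W₂ W₃ ∘ₗ h) := by
  ext x <;> rfl

private lemma phi_inr' (h : W₄ →ₗ[k] W₃) :
    (LinearMap.prod (fst k W₁ W₂ ∘ₗ fst k (W₁ × W₂) W₃)
        (LinearMap.prod (snd k W₁ W₂ ∘ₗ fst k (W₁ × W₂) W₃) (snd k (W₁ × W₂) W₃))) ∘ₗ
      (inr k (W₁ × W₂) W₃ ∘ₗ h) = inr k W₁ (W₂ × W₃) ∘ₗ (inr k W₂ W₃ ∘ₗ h) := by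
  ext x <;> rfl

end phi

set_option maxHeartbeats 1000000

/-- **Proposition 2.14 (conclusion).** If `(C₁,C₂)`, `(C₁,C₃)`, `(C₂,C₃)` are Dorroh pairs of
coalgebras, `C₃` is both a `C₁`-`C₂`-bicomodule and a `C₂`-`C₁`-bicomodule, and the four mixed
compatibility conditions hold, then `(C₁⋉_d C₂, C₃)` and `(C₁, C₂⋉_d C₃)` are Dorroh pairs of
coalgebras and `((c,d),e) ↦ (c,(d,e))` is a coalgebra isomorphism
`(C₁⋉_d C₂)⋉_d C₃ ≅ C₁⋉_d (C₂⋉_d C₃)`. -/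
theorem dorroh_coalgebra_iterated {C₁ C₂ C₃ : Type}
    [AddCommGroup C₁] [Module k C₁] [AddCommGroup C₂] [Module k C₂]
    [AddCommGroup C₃] [Module k C₃]
    (Δ₁ : C₁ →ₗ[k] C₁ ⊗[k] C₁) (Δ₂ : C₂ →ₗ[k] C₂ ⊗[k] C₂) (Δ₃ : C₃ →ₗ[k] C₃ ⊗[k] C₃)
    (ρl2 : C₂ →ₗ[k] C₁ ⊗[k] C₂) (ρr2 : C₂ →ₗ[k] C₂ ⊗[k] C₁)
    (ρl31 : C₃ →ₗ[k] C₁ ⊗[k] C₃) (ρr31 : C₃ →ₗ[k] C₃ ⊗[k] C₁)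
    (ρl32 : C₃ →ₗ[k] C₂ ⊗[k] C₃) (ρr32 : C₃ →ₗ[k] C₃ ⊗[k] C₂)
    (h12 : IsDorrohPairC Δ₁ Δ₂ ρl2 ρr2)
    (h13 : IsDorrohPairC Δ₁ Δ₃ ρl31 ρr31)
    (h23 : IsDorrohPairC Δ₂ Δ₃ ρl32 ρr32)
    -- `C₃` is a `C₁`-`C₂`-bicomodule
    (hbi12 : ρr32.lTensor C₁ ∘ₗ ρl31 =
      (TensorProduct.assoc k C₁ C₃ C₂).toLinearMap ∘ₗ ρl31.rTensor C₂ ∘ₗ ρr32)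
    -- `C₃` is a `C₂`-`C₁`-bicomodule
    (hbi21 : ρr31.lTensor C₂ ∘ₗ ρl32 =
      (TensorProduct.assoc k C₂ C₃ C₁).toLinearMap ∘ₗ ρl32.rTensor C₁ ∘ₗ ρr31)
    -- Eq. (11): (id⊗ρ_{l,C₃}^{C₁})ρ_{l,C₃}^{C₂} = (ρ_{r,C₂}^{C₁}⊗id)ρ_{l,C₃}^{C₂}
    (hm1 : ρl31.lTensor C₂ ∘ₗ ρl32 =
      (TensorProduct.assoc k C₂ C₁ C₃).toLinearMap ∘ₗ ρr2.rTensor C₃ ∘ₗ ρl32)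
    -- Eq. (12): (id⊗ρ_{l,C₃}^{C₂})ρ_{l,C₃}^{C₁} = (ρ_{l,C₂}^{C₁}⊗id)ρ_{l,C₃}^{C₂}
    (hm2 : ρl32.lTensor C₁ ∘ₗ ρl31 =
      (TensorProduct.assoc k C₁ C₂ C₃).toLinearMap ∘ₗ ρl2.rTensor C₃ ∘ₗ ρl32)
    -- Eq. (13): (ρ_{r,C₃}^{C₁}⊗id)ρ_{r,C₃}^{C₂} = (id⊗ρ_{l,C₂}^{C₁})ρ_{r,C₃}^{C₂}
    (hm3 : (TensorProduct.assoc k C₃ C₁ C₂).toLinearMap ∘ₗ ρr31.rTensor C₂ ∘ₗ ρr32 =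
      ρl2.lTensor C₃ ∘ₗ ρr32)
    -- Eq. (14): (ρ_{r,C₃}^{C₂}⊗id)ρ_{r,C₃}^{C₁} = (id⊗ρ_{r,C₂}^{C₁})ρ_{r,C₃}^{C₂}
    (hm4 : (TensorProduct.assoc k C₃ C₂ C₁).toLinearMap ∘ₗ ρr32.rTensor C₁ ∘ₗ ρr31 =
      ρr2.lTensor C₃ ∘ₗ ρr32) :
    IsDorrohPairC (dorrohComul Δ₁ Δ₂ ρl2 ρr2) Δ₃
      ((LinearMap.inl k C₁ C₂).rTensor C₃ ∘ₗ ρl31 +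
        (LinearMap.inr k C₁ C₂).rTensor C₃ ∘ₗ ρl32)
      ((LinearMap.inl k C₁ C₂).lTensor C₃ ∘ₗ ρr31 +
        (LinearMap.inr k C₁ C₂).lTensor C₃ ∘ₗ ρr32) ∧
    IsDorrohPairC Δ₁ (dorrohComul Δ₂ Δ₃ ρl32 ρr32)
      ((LinearMap.inl k C₂ C₃).lTensor C₁ ∘ₗ ρl2 ∘ₗ LinearMap.fst k C₂ C₃ +
        (LinearMap.inr k C₂ C₃).lTensor C₁ ∘ₗ ρl31 ∘ₗ LinearMap.snd k C₂ C₃)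
      ((LinearMap.inl k C₂ C₃).rTensor C₁ ∘ₗ ρr2 ∘ₗ LinearMap.fst k C₂ C₃ +
        (LinearMap.inr k C₂ C₃).rTensor C₁ ∘ₗ ρr31 ∘ₗ LinearMap.snd k C₂ C₃) ∧
    Function.Bijective
      (LinearMap.prod (LinearMap.fst k C₁ C₂ ∘ₗ LinearMap.fst k (C₁ × C₂) C₃)
        (LinearMap.prod (LinearMap.snd k C₁ C₂ ∘ₗ LinearMap.fst k (C₁ × C₂) C₃)
          (LinearMap.snd k (C₁ × C₂) C₃))) ∧
    TensorProduct.map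
        (LinearMap.prod (LinearMap.fst k C₁ C₂ ∘ₗ LinearMap.fst k (C₁ × C₂) C₃)
          (LinearMap.prod (LinearMap.snd k C₁ C₂ ∘ₗ LinearMap.fst k (C₁ × C₂) C₃)
            (LinearMap.snd k (C₁ × C₂) C₃)))
        (LinearMap.prod (LinearMap.fst k C₁ C₂ ∘ₗ LinearMap.fst k (C₁ × C₂) C₃)
          (LinearMap.prod (LinearMap.snd k C₁ C₂ ∘ₗ LinearMap.fst k (C₁ × C₂) C₃)
            (LinearMap.snd k (C₁ × C₂) C₃))) ∘ₗ
      dorrohComul (dorrohComul Δ₁ Δ₂ ρl2 ρr2) Δ₃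
        ((LinearMap.inl k C₁ C₂).rTensor C₃ ∘ₗ ρl31 +
          (LinearMap.inr k C₁ C₂).rTensor C₃ ∘ₗ ρl32)
        ((LinearMap.inl k C₁ C₂).lTensor C₃ ∘ₗ ρr31 +
          (LinearMap.inr k C₁ C₂).lTensor C₃ ∘ₗ ρr32) =
    dorrohComul Δ₁ (dorrohComul Δ₂ Δ₃ ρl32 ρr32)
        ((LinearMap.inl k C₂ C₃).lTensor C₁ ∘ₗ ρl2 ∘ₗ LinearMap.fst k C₂ C₃ +
          (LinearMap.inr k C₂ C₃).lTensor C₁ ∘ₗ ρl31 ∘ₗ LinearMap.snd k C₂ C₃)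
        ((LinearMap.inl k C₂ C₃).rTensor C₁ ∘ₗ ρr2 ∘ₗ LinearMap.fst k C₂ C₃ +
          (LinearMap.inr k C₂ C₃).rTensor C₁ ∘ₗ ρr31 ∘ₗ LinearMap.snd k C₂ C₃) ∘ₗ
      LinearMap.prod (LinearMap.fst k C₁ C₂ ∘ₗ LinearMap.fst k (C₁ × C₂) C₃)
        (LinearMap.prod (LinearMap.snd k C₁ C₂ ∘ₗ LinearMap.fst k (C₁ × C₂) C₃)
          (LinearMap.snd k (C₁ × C₂) C₃)) := by
  have cb1 := dorroh_coassoc h12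
  have cb2 := dorroh_coassoc h23
  have hc3 := h13.2.1
  have hc1 := h13.1
  obtain ⟨h121, h122, h123, h124, h125, h126, h127, h128⟩ := h12
  obtain ⟨h131, h132, h133, h134, h135, h136, h137, h138⟩ := h13
  obtain ⟨h231, h232, h233, h234, h235, h236, h237, h238⟩ := h23
  replace h124 := h124.symm; replace h125 := h125.symm; replace h126 := h126.symm
  replace h134 := h134.symm; replace h135 := h135.symm; replace h136 := h136.symm
  replace h234 := h234.symm; replace h235 := h235.symm; replace h236 := h236.symm
  replace hbi12 := hbi12.symm; replace hbi21 := hbi21.symm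
  replace hm1 := hm1.symm; replace hm2 := hm2.symm
  unfold Coassoc at h121 h122 h131 h231 h232
  simp only [lT_eq, rT_eq, LinearMap.comp_assoc] at h121 h122 h123 h124 h125 h126 h127 h128
  simp only [lT_eq, rT_eq, LinearMap.comp_assoc] at h131 h133 h134 h135 h136 h137 h138
  simp only [lT_eq, rT_eq, LinearMap.comp_assoc] at h231 h232 h233 h234 h235 h236 h237 h238
  simp only [lT_eq, rT_eq, LinearMap.comp_assoc] at hbi12 hbi21 hm1 hm2 hm3 hm4
  refine ⟨⟨cb1, hc3, ?_, ?_, ?_, ?_, ?_, ?_⟩,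
    ⟨hc1, cb2, ?_, ?_, ?_, ?_, ?_, ?_⟩,
    ?bij, ?_⟩
  case bij => exact (Equiv.prodAssoc C₁ C₂ C₃).bijective
  all_goals try apply LinearMap.prod_ext
  all_goals try apply LinearMap.prod_ext
  all_goals
    simp only [dorrohComul, lT_eq, rT_eq, LinearMap.comp_assoc, LinearMap.add_comp,
      LinearMap.comp_add, TensorProduct.map_add_left, TensorProduct.map_add_right,
      mapfuse, mapfuse0, nat3, nat1, nat2, nat0, natL_inl', natL_inr', natL_inl, natL_inr,
      fst_inl', snd_inl', fst_inr', snd_inr',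
      phi_inl_inl', phi_inl_inr', phi_inr', phi_inl_inl, phi_inl_inr, phi_inr,
      LinearMap.fst_comp_inl, LinearMap.snd_comp_inl, LinearMap.fst_comp_inr,
      LinearMap.snd_comp_inr, LinearMap.comp_id, LinearMap.id_comp, LinearMap.comp_zero,
      LinearMap.zero_comp, TensorProduct.map_zero_left, TensorProduct.map_zero_right,
      TensorProduct.map_id, zero_add, add_zero,
      h121, h122, h123, h124, h125, h126, h127, h128,
      h131, h132, h133, h134, h135, h136, h137, h138,
      h231, h232, h233, h234, h235, h236, h237, h238,
      hbi12, hbi21, hm1, hm2, hm3, hm4]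
  all_goals try abel


end
end

section
/- Let A be an associative algebra (not necessarily unital) over a field k and M an A-bimodule. Let M_r° (resp. M_l°) be the set of f ∈ M* vanishing on some right (resp. left) A-submodule of M of finite codimension, and set M° = M_l° ∩ M_r°. Then for every f ∈ M° there exist finitely many f_i ∈ M°, g_i ∈ A° with f(xa) = Σ f_i(x)g_i(a) for all x ∈ M, a ∈ A, and finitely many l_i ∈ A°, h_i ∈ M° with f(ax) = Σ l_i(a)h_i(x) for all a ∈ A, x ∈ M; moreover (M°, ρ_l, ρ_r) is an A°-bicomodule, i.e. (ρ_l⊗id)ρ_r = (id⊗ρ_r)ρ_l on M°, where ρ_l and ρ_r are the restrictions of the duals of the left and right action maps. -/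
/-! For `f ∈ M°` vanishing on a right-stable `N` of finite codimension, the functionals
`x ↦ f(x a)` all lie in the finite-dimensional space `N^⊥ ≅ (M/N)*`, so expanding them in a basis
gives `f(x a) = Σ fᵢ(x) gᵢ(a)`. Each `gᵢ` vanishes on the annihilator of `M/N`, a right ideal
of finite codimension since `A/ann(M/N)` embeds in `End(M/N)`; each `fᵢ = f(· a)` stays in `M°`
because the actions commute. The left case is symmetric, and the bicomodule identity is
`f` applied to the bimodule axiom `(a x) b = a (x b)`. -/

section

variable {k : Type} [Field k]

/-- The finite dual `A°` of a (not necessarily unital) algebra `A`. -/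
def finDual (k : Type) [Field k] (A : Type) [NonUnitalRing A] [Module k A]
    [SMulCommClass k A A] [IsScalarTower k A A] : Set (Module.Dual k A) :=
  {f | ∃ R : Submodule k A, (∀ x ∈ R, ∀ a : A, x * a ∈ R) ∧
        FiniteDimensional k (A ⧸ R) ∧ ∀ x ∈ R, f x = 0}

/-- The finite dual `M_r°` of a right `A`-module with action `μ`. -/
def finDualModR {A M : Type} [NonUnitalRing A] [Module k A]
    [SMulCommClass k A A] [IsScalarTower k A A] [AddCommGroup M] [Module k M]
    (μ : M →ₗ[k] A →ₗ[k] M) : Set (Module.Dual k M) :=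
  {f | ∃ N : Submodule k M, (∀ x ∈ N, ∀ a : A, μ x a ∈ N) ∧
        FiniteDimensional k (M ⧸ N) ∧ ∀ x ∈ N, f x = 0}

/-- The finite dual `M_l°` of a left `A`-module with action `lμ`. -/
def finDualModL {A M : Type} [NonUnitalRing A] [Module k A]
    [SMulCommClass k A A] [IsScalarTower k A A] [AddCommGroup M] [Module k M]
    (lμ : A →ₗ[k] M →ₗ[k] M) : Set (Module.Dual k M) :=
  {f | ∃ N : Submodule k M, (∀ x ∈ N, ∀ a : A, lμ a x ∈ N) ∧
        FiniteDimensional k (M ⧸ N) ∧ ∀ x ∈ N, f x = 0}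

lemma finiteDimensional_quotient_ker {V W : Type} [AddCommGroup V] [Module k V]
    [AddCommGroup W] [Module k W] [FiniteDimensional k W] (φ : V →ₗ[k] W) :
    FiniteDimensional k (V ⧸ LinearMap.ker φ) :=
  φ.quotKerEquivRange.symm.finiteDimensional

lemma finiteDimensional_quotient_comap {M M' : Type} [AddCommGroup M] [Module k M]
    [AddCommGroup M'] [Module k M'] (g : M →ₗ[k] M') (N : Submodule k M')
    [FiniteDimensional k (M' ⧸ N)] : FiniteDimensional k (M ⧸ N.comap g) := by
  rw [← Submodule.ker_mkQ N, ← LinearMap.ker_comp]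
  exact finiteDimensional_quotient_ker _

lemma LinearMap.exists_eq_sum_smul_of_finiteDimensional_range {V W : Type} [AddCommGroup V]
    [Module k V] [AddCommGroup W] [Module k W] (Φ : V →ₗ[k] W)
    [FiniteDimensional k (LinearMap.range Φ)] :
    ∃ (n : ℕ) (w : Fin n → W) (h : Fin n → Module.Dual k V),
      (∀ i, w i ∈ LinearMap.range Φ) ∧ (∀ i, LinearMap.ker Φ ≤ LinearMap.ker (h i)) ∧
      ∀ v, Φ v = ∑ i, h i v • w i := by
  let b := Module.finBasis k (LinearMap.range Φ)
  refine ⟨_, fun i => b i, fun i => b.coord i ∘ₗ Φ.rangeRestrict, fun i => (b i).2,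
    fun i v hv => ?_, fun v => ?_⟩
  · simp [show Φ.rangeRestrict v = 0 from Subtype.ext (LinearMap.mem_ker.mp hv)]
  · have h := congrArg Subtype.val (b.sum_repr (Φ.rangeRestrict v))
    simp only [Submodule.coe_sum, Submodule.coe_smul, LinearMap.codRestrict_apply] at h
    exact h.symm

section Annihilator

variable {A M : Type} [NonUnitalRing A] [Module k A] [AddCommGroup M] [Module k M]

/-- The annihilator of `M ⧸ N`. -/
def actAnnihilator (ρ : A →ₗ[k] M →ₗ[k] M) (N : Submodule k M) : Submodule k A :=
  LinearMap.ker (LinearMap.llcomp k M M (M ⧸ N) N.mkQ ∘ₗ ρ)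

lemma mem_actAnnihilator {ρ : A →ₗ[k] M →ₗ[k] M} {N : Submodule k M} {a : A} :
    a ∈ actAnnihilator ρ N ↔ ∀ x, ρ a x ∈ N := by
  simp [actAnnihilator, LinearMap.ext_iff, Submodule.Quotient.mk_eq_zero]

lemma finiteDimensional_quotient_actAnnihilator (ρ : A →ₗ[k] M →ₗ[k] M) (N : Submodule k M)
    (hN : ∀ x ∈ N, ∀ a, ρ a x ∈ N) [FiniteDimensional k (M ⧸ N)] :
    FiniteDimensional k (A ⧸ actAnnihilator ρ N) := by
  let ψ := Submodule.mapQLinear N N ∘ₗ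
    ρ.codRestrict (Submodule.compatibleMaps N N) fun a x hx => hN x hx a
  have : actAnnihilator ρ N = LinearMap.ker ψ := by
    ext a
    rw [mem_actAnnihilator, LinearMap.mem_ker, LinearMap.ext_iff,
      (Submodule.Quotient.mk_surjective N).forall]
    exact forall_congr' fun x => (Submodule.Quotient.mk_eq_zero N).symm
  rw [this]
  exact finiteDimensional_quotient_ker ψ

lemma mul_mem_actAnnihilator_of_map_mul {ρ : A →ₗ[k] M →ₗ[k] M} {N : Submodule k M}
    (hρ : ∀ a b x, ρ (a * b) x = ρ a (ρ b x)) {a : A} (ha : a ∈ actAnnihilator ρ N) (b : A) :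
    a * b ∈ actAnnihilator ρ N :=
  mem_actAnnihilator.2 fun x => hρ a b x ▸ mem_actAnnihilator.1 ha _

lemma mul_mem_actAnnihilator_of_map_mul_rev {ρ : A →ₗ[k] M →ₗ[k] M} {N : Submodule k M}
    (hρ : ∀ a b x, ρ (a * b) x = ρ b (ρ a x)) (hN : ∀ x ∈ N, ∀ a, ρ a x ∈ N) {a : A}
    (ha : a ∈ actAnnihilator ρ N) (b : A) : a * b ∈ actAnnihilator ρ N :=
  mem_actAnnihilator.2 fun x => hρ a b x ▸ hN _ (mem_actAnnihilator.1 ha x) b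

end Annihilator

section FinDualMod

variable {A M : Type} [NonUnitalRing A] [Module k A] [SMulCommClass k A A] [IsScalarTower k A A]
  [AddCommGroup M] [Module k M]

lemma finDualModR_eq_finDualModL_flip (μ : M →ₗ[k] A →ₗ[k] M) :
    finDualModR μ = finDualModL μ.flip :=
  rfl

lemma comp_act_mem_finDualModL {ρ : A →ₗ[k] M →ₗ[k] M} {f : Module.Dual k M}
    (hf : f ∈ finDualModL ρ) (a : A) : f ∘ₗ ρ a ∈ finDualModL ρ := by
  obtain ⟨N, hN, hNfd, hfN⟩ := hf
  exact ⟨N, hN, hNfd, fun x hx => hfN _ (hN x hx a)⟩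

lemma comp_mem_finDualModL_of_commute {ρ : A →ₗ[k] M →ₗ[k] M} {f : Module.Dual k M}
    (hf : f ∈ finDualModL ρ) (g : M →ₗ[k] M) (hg : ∀ a x, g (ρ a x) = ρ a (g x)) :
    f ∘ₗ g ∈ finDualModL ρ := by
  obtain ⟨N, hN, _, hfN⟩ := hf
  exact ⟨N.comap g, fun x hx a => by simpa [hg] using hN _ hx a,
    finiteDimensional_quotient_comap g N, fun x hx => hfN _ hx⟩

lemma exists_sum_comp_act (ρ : A →ₗ[k] M →ₗ[k] M) (N : Submodule k M)
    (hN : ∀ x ∈ N, ∀ a, ρ a x ∈ N) [FiniteDimensional k (M ⧸ N)]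
    (hI : ∀ a ∈ actAnnihilator ρ N, ∀ b, a * b ∈ actAnnihilator ρ N)
    {f : Module.Dual k M} (hfN : ∀ x ∈ N, f x = 0)
    (S : Set (Module.Dual k M)) (hS : ∀ a, f ∘ₗ ρ a ∈ S) :
    ∃ (n : ℕ) (g : Fin n → Module.Dual k M) (h : Fin n → Module.Dual k A),
      (∀ i, g i ∈ S ∧ h i ∈ finDual k A) ∧ ∀ x a, f (ρ a x) = ∑ i, g i x * h i a := by
  let Φ : A →ₗ[k] Module.Dual k M := LinearMap.llcomp k M M k f ∘ₗ ρ
  have hrange : LinearMap.range Φ ≤ N.dualAnnihilator := by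
    rintro _ ⟨a, rfl⟩
    exact (Submodule.mem_dualAnnihilator _).2 fun x hx => hfN _ (hN x hx a)
  have : FiniteDimensional k N.dualAnnihilator := N.dualQuotEquivDualAnnihilator.finiteDimensional
  have : FiniteDimensional k (LinearMap.range Φ) := Submodule.finiteDimensional_of_le hrange
  obtain ⟨n, g, h, hg, hh, hΦ⟩ := Φ.exists_eq_sum_smul_of_finiteDimensional_range
  refine ⟨n, g, h, fun i => ⟨?_, ?_⟩, fun x a => ?_⟩
  · obtain ⟨a, ha⟩ := hg i
    exact ha ▸ hS a
  · refine ⟨actAnnihilator ρ N, hI, finiteDimensional_quotient_actAnnihilator ρ N hN,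
      fun a ha => LinearMap.mem_ker.1 (hh i (LinearMap.ext fun x => ?_))⟩
    exact hfN _ (mem_actAnnihilator.1 ha x)
  · exact (LinearMap.congr_fun (hΦ a) x).trans (by simp [mul_comm])

lemma exists_sum_of_mem_finDualModL {ρ : A →ₗ[k] M →ₗ[k] M}
    (hρ : ∀ a b x, ρ (a * b) x = ρ a (ρ b x)) {f : Module.Dual k M} (hf : f ∈ finDualModL ρ)
    (S : Set (Module.Dual k M)) (hS : ∀ a, f ∘ₗ ρ a ∈ S) :
    ∃ (n : ℕ) (g : Fin n → Module.Dual k M) (h : Fin n → Module.Dual k A),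
      (∀ i, g i ∈ S ∧ h i ∈ finDual k A) ∧ ∀ x a, f (ρ a x) = ∑ i, g i x * h i a := by
  obtain ⟨N, hN, _, hfN⟩ := hf
  exact exists_sum_comp_act ρ N hN (fun a ha => mul_mem_actAnnihilator_of_map_mul hρ ha) hfN S hS

lemma exists_sum_of_mem_finDualModR {μ : M →ₗ[k] A →ₗ[k] M}
    (hμ : ∀ x a b, μ (μ x a) b = μ x (a * b)) {f : Module.Dual k M} (hf : f ∈ finDualModR μ)
    (S : Set (Module.Dual k M)) (hS : ∀ a, f ∘ₗ μ.flip a ∈ S) :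
    ∃ (n : ℕ) (g : Fin n → Module.Dual k M) (h : Fin n → Module.Dual k A),
      (∀ i, g i ∈ S ∧ h i ∈ finDual k A) ∧ ∀ x a, f (μ x a) = ∑ i, g i x * h i a := by
  obtain ⟨N, hN, _, hfN⟩ := hf
  exact exists_sum_comp_act μ.flip N hN
    (fun a ha => mul_mem_actAnnihilator_of_map_mul_rev (fun a b x => (hμ x a b).symm) hN ha)
    hfN S hS

end FinDualMod

/-- **Proposition 3.9.** Let `M` be an `A`-bimodule and `M° = M_l° ∩ M_r°`. For every
`f ∈ M°` the functional `f(x a)` is `Σ f_i(x) g_i(a)` with `f_i ∈ M°`, `g_i ∈ A°`, and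
`f(a x)` is `Σ l_i(a) h_i(x)` with `l_i ∈ A°`, `h_i ∈ M°`; moreover `(M°, ρ_l, ρ_r)` is
an `A°`-bicomodule: `(ρ_l ⊗ id) ρ_r = (id ⊗ ρ_r) ρ_l`. -/
theorem finDual_bimodule_bicomodule {A M : Type} [NonUnitalRing A] [Module k A]
    [SMulCommClass k A A] [IsScalarTower k A A] [AddCommGroup M] [Module k M]
    (lμ : A →ₗ[k] M →ₗ[k] M) (rμ : M →ₗ[k] A →ₗ[k] M)
    (hl : ∀ (a b : A) (x : M), lμ (a * b) x = lμ a (lμ b x))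
    (hr : ∀ (x : M) (a b : A), rμ (rμ x a) b = rμ x (a * b))
    (hlr : ∀ (a : A) (x : M) (b : A), lμ a (rμ x b) = rμ (lμ a x) b)
    (f : Module.Dual k M)
    (hf : f ∈ finDualModL lμ ∩ finDualModR rμ) :
    (∃ (n : ℕ) (g : Fin n → Module.Dual k M) (h : Fin n → Module.Dual k A),
      (∀ i, g i ∈ finDualModL lμ ∩ finDualModR rμ ∧ h i ∈ finDual k A) ∧
      ∀ (x : M) (a : A), f (rμ x a) = ∑ i, g i x * h i a) ∧
    (∃ (m : ℕ) (u : Fin m → Module.Dual k A) (v : Fin m → Module.Dual k M),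
      (∀ i, u i ∈ finDual k A ∧ v i ∈ finDualModL lμ ∩ finDualModR rμ) ∧
      ∀ (a : A) (x : M), f (lμ a x) = ∑ i, u i a * v i x) ∧
    ∀ (a : A) (x : M) (b : A), f (lμ a (rμ x b)) = f (rμ (lμ a x) b) := by
  obtain ⟨hfl, hfr⟩ := hf
  rw [finDualModR_eq_finDualModL_flip] at hfr ⊢
  refine ⟨?_, ?_, fun a x b => congrArg f (hlr a x b)⟩
  · refine exists_sum_of_mem_finDualModR hr hfr _ fun a => ?_
    exact ⟨comp_mem_finDualModL_of_commute hfl _ fun b x => (hlr b x a).symm,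
      comp_act_mem_finDualModL hfr a⟩
  · obtain ⟨n, g, h, hmem, hsum⟩ := exists_sum_of_mem_finDualModL hl hfl
      (finDualModL lμ ∩ finDualModL rμ.flip) fun a =>
        ⟨comp_act_mem_finDualModL hfl a, comp_mem_finDualModL_of_commute hfr _ fun b x => hlr a x b⟩
    exact ⟨n, h, g, fun i => (hmem i).symm, fun a x => by simp only [hsum, mul_comm]⟩

end
end
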